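/- Let K be an isolated non-saddle compact invariant set of a flow on a compact metric space M. If K has a positively or negatively dissonant point in I(K), then K has an externally dissonant point. -/

import Mathlib

open Set Filter Topology

variable {M : Type*}

/-- The positive semi-trajectory `γ⁺(x)`. -/
def posOrbit [TopologicalSpace M] (φ : Flow ℝ M) (x : M) : Set M :=
  {y | ∃ t : ℝ, 0 ≤ t ∧ φ t x = y}

/-- The negative semi-trajectory `γ⁻(x)`. -/
def negOrbit [TopologicalSpace M] (φ : Flow ℝ M) (x : M) : Set M :=
  {y | ∃ t : ℝ, t ≤ 0 ∧ φ t x = y}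

/-- The omega-limit set `ω(x) = ⋂_{t>0} closure (x·[t,∞))`. -/
def omegaLim [TopologicalSpace M] (φ : Flow ℝ M) (x : M) : Set M :=
  ⋂ t ∈ Set.Ioi (0:ℝ), closure {y | ∃ s : ℝ, t ≤ s ∧ φ s x = y}

/-- The negative omega-limit set `ω*(x) = ⋂_{t<0} closure (x·(-∞,t])`. -/
def alphaLim [TopologicalSpace M] (φ : Flow ℝ M) (x : M) : Set M :=
  ⋂ t ∈ Set.Iio (0:ℝ), closure {y | ∃ s : ℝ, s ≤ t ∧ φ s x = y}

/-- `K` is invariant under the flow. -/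
def FlowInvariant [TopologicalSpace M] (φ : Flow ℝ M) (K : Set M) : Prop :=
  ∀ x ∈ K, ∀ t : ℝ, φ t x ∈ K

/-- `K` is a compact invariant set which is the maximal invariant subset of some
compact neighborhood (an isolated invariant compactum). -/
def IsIsolatedInv [TopologicalSpace M] (φ : Flow ℝ M) (K : Set M) : Prop :=
  IsCompact K ∧ FlowInvariant φ K ∧
    ∃ N : Set M, IsCompact N ∧ K ⊆ interior N ∧
      ∀ x ∈ N, (∀ t : ℝ, φ t x ∈ N) → x ∈ K

/-- `K` is saddle: it admits a neighborhood `U` such that every neighborhood `V` of `K`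
contains a point whose positive and negative semi-trajectories both leave `U`. -/
def Saddle [TopologicalSpace M] (φ : Flow ℝ M) (K : Set M) : Prop :=
  ∃ U : Set M, K ⊆ interior U ∧ ∀ V : Set M, K ⊆ interior V →
    ∃ x ∈ V, ¬ posOrbit φ x ⊆ U ∧ ¬ negOrbit φ x ⊆ U

/-- `K` is non-saddle: every neighborhood `U` of `K` contains a neighborhood `V` of `K`
such that every point of `V` has `γ⁺(x) ⊆ U` or `γ⁻(x) ⊆ U`. -/
def NonSaddle [TopologicalSpace M] (φ : Flow ℝ M) (K : Set M) : Prop :=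
  ∀ U : Set M, K ⊆ interior U → ∃ V : Set M, K ⊆ interior V ∧ V ⊆ U ∧
    ∀ x ∈ V, posOrbit φ x ⊆ U ∨ negOrbit φ x ⊆ U

/-- The stable manifold (region of attraction) `A(K)`. -/
def Aset [TopologicalSpace M] (φ : Flow ℝ M) (K : Set M) : Set M :=
  {x | (omegaLim φ x).Nonempty ∧ omegaLim φ x ⊆ K}

/-- The unstable manifold (region of repulsion) `R(K)`. -/
def Rset [TopologicalSpace M] (φ : Flow ℝ M) (K : Set M) : Set M :=
  {x | (alphaLim φ x).Nonempty ∧ alphaLim φ x ⊆ K}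

/-- The region of influence `I(K) = A(K) ∪ R(K)`. -/
def Iset [TopologicalSpace M] (φ : Flow ℝ M) (K : Set M) : Set M :=
  Aset φ K ∪ Rset φ K

/-- `H(K) = A(K) ∩ R(K)`. -/
def Hset [TopologicalSpace M] (φ : Flow ℝ M) (K : Set M) : Set M :=
  Aset φ K ∩ Rset φ K

/-- The positive prolongational limit set `J⁺(x)`. -/
def Jplus [TopologicalSpace M] (φ : Flow ℝ M) (x : M) : Set M :=
  {y | ∃ (xs : ℕ → M) (ts : ℕ → ℝ), Tendsto xs atTop (𝓝 x) ∧
    Tendsto ts atTop atTop ∧ Tendsto (fun n => φ (ts n) (xs n)) atTop (𝓝 y)}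

/-- The negative prolongational limit set `J⁻(x)`. -/
def Jminus [TopologicalSpace M] (φ : Flow ℝ M) (x : M) : Set M :=
  {y | ∃ (xs : ℕ → M) (ts : ℕ → ℝ), Tendsto xs atTop (𝓝 x) ∧
    Tendsto ts atTop atBot ∧ Tendsto (fun n => φ (ts n) (xs n)) atTop (𝓝 y)}

/-- The two-sided prolongational limit set `J*(x)`. -/
def Jstar [TopologicalSpace M] (φ : Flow ℝ M) (x : M) : Set (M × M) :=
  {p | ∃ (xs : ℕ → M) (ts ss : ℕ → ℝ), Tendsto xs atTop (𝓝 x) ∧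
    Tendsto ts atTop atTop ∧ Tendsto ss atTop atBot ∧
    Tendsto (fun n => φ (ts n) (xs n)) atTop (𝓝 p.1) ∧
    Tendsto (fun n => φ (ss n) (xs n)) atTop (𝓝 p.2)}

/-- `x ∈ I(K)` is positively dissonant. -/
def PosDissonant [TopologicalSpace M] (φ : Flow ℝ M) (K : Set M) (x : M) : Prop :=
  x ∈ Iset φ K ∧ x ∉ Aset φ K ∧ (Jplus φ x ∩ K).Nonempty

/-- `x ∈ I(K)` is negatively dissonant. -/
def NegDissonant [TopologicalSpace M] (φ : Flow ℝ M) (K : Set M) (x : M) : Prop :=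
  x ∈ Iset φ K ∧ x ∉ Rset φ K ∧ (Jminus φ x ∩ K).Nonempty

/-- `x ∉ I(K)` is externally dissonant. -/
def ExtDissonant [TopologicalSpace M] (φ : Flow ℝ M) (K : Set M) (x : M) : Prop :=
  x ∉ Iset φ K ∧ (Jstar φ x ∩ K ×ˢ K).Nonempty

/-- `x` is a dissonant point of `K`. -/
def Dissonant [TopologicalSpace M] (φ : Flow ℝ M) (K : Set M) (x : M) : Prop :=
  PosDissonant φ K x ∨ NegDissonant φ K x ∨ ExtDissonant φ K x

/-- `N` is an isolating block for `K` with entrance set `Ni` and exit set `No`. -/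
structure IsolatingBlock [TopologicalSpace M] (φ : Flow ℝ M) (K N Ni No : Set M) : Prop where
  compact_N : IsCompact N
  nbhd : K ⊆ interior N
  maximal : ∀ x ∈ N, (∀ t : ℝ, φ t x ∈ N) → x ∈ K
  compact_Ni : IsCompact Ni
  compact_No : IsCompact No
  Ni_sub : Ni ⊆ frontier N
  No_sub : No ⊆ frontier N
  cover : frontier N = Ni ∪ No
  entrance : ∀ x ∈ Ni, ∃ ε > (0:ℝ), ∀ t ∈ Set.Ico (-ε) (0:ℝ), φ t x ∉ N
  exitSet : ∀ x ∈ No, ∃ δ > (0:ℝ), ∀ t ∈ Set.Ioc (0:ℝ) δ, φ t x ∉ N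
  tang_neg : ∀ x ∈ frontier N \ Ni, ∃ ε > (0:ℝ), ∀ t ∈ Set.Ico (-ε) (0:ℝ), φ t x ∈ interior N
  tang_pos : ∀ x ∈ frontier N \ No, ∃ δ > (0:ℝ), ∀ t ∈ Set.Ioc (0:ℝ) δ, φ t x ∈ interior N

/-- `p` is strongly influenced by `K`. -/
def StronglyInfluenced [TopologicalSpace M] (φ : Flow ℝ M) (K : Set M) (p : M) : Prop :=
  ∃ U ∈ 𝓝 p, ∀ V : Set M, K ⊆ interior V → ∃ T : ℝ, 0 ≤ T ∧ ∀ x ∈ U,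
    (∀ t : ℝ, T ≤ t → φ t x ∈ V) ∨ (∀ t : ℝ, t ≤ -T → φ t x ∈ V)

/-- `p` is strongly attracted by `K`. -/
def StronglyAttracted [TopologicalSpace M] (φ : Flow ℝ M) (K : Set M) (p : M) : Prop :=
  ∃ U ∈ 𝓝 p, ∀ V : Set M, K ⊆ interior V → ∃ T : ℝ, 0 ≤ T ∧ ∀ x ∈ U,
    ∀ t : ℝ, T ≤ t → φ t x ∈ V

/-- `p` is strongly repelled by `K`. -/
def StronglyRepelled [TopologicalSpace M] (φ : Flow ℝ M) (K : Set M) (p : M) : Prop :=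
  ∃ U ∈ 𝓝 p, ∀ V : Set M, K ⊆ interior V → ∃ T : ℝ, 0 ≤ T ∧ ∀ x ∈ U,
    ∀ t : ℝ, t ≤ -T → φ t x ∈ V

/-- `K` is (positively) stable. -/
def IsStable [TopologicalSpace M] (φ : Flow ℝ M) (K : Set M) : Prop :=
  ∀ U : Set M, K ⊆ interior U → ∃ V : Set M, K ⊆ interior V ∧ V ⊆ U ∧
    ∀ x ∈ V, ∀ t : ℝ, 0 ≤ t → φ t x ∈ V

/-- `K` is negatively stable. -/
def IsNegStable [TopologicalSpace M] (φ : Flow ℝ M) (K : Set M) : Prop :=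
  ∀ U : Set M, K ⊆ interior U → ∃ V : Set M, K ⊆ interior V ∧ V ⊆ U ∧
    ∀ x ∈ V, ∀ t : ℝ, t ≤ 0 → φ t x ∈ V

/-- `K` is an attractor: stable and attracting some neighborhood. -/
def IsAttractor [TopologicalSpace M] (φ : Flow ℝ M) (K : Set M) : Prop :=
  IsStable φ K ∧ ∃ W : Set M, K ⊆ interior W ∧ W ⊆ Aset φ K

/-- `K` is a repeller: negatively stable and repelling some neighborhood. -/
def IsRepeller [TopologicalSpace M] (φ : Flow ℝ M) (K : Set M) : Prop :=
  IsNegStable φ K ∧ ∃ W : Set M, K ⊆ interior W ∧ W ⊆ Rset φ K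


/-!
Let `x ∈ R(K) \ A(K)` with `k ∈ J⁺(x) ∩ K`, witnessed by `xₙ → x`, `tₙ → ∞`, `xₙ·tₙ → k`, and
let `k' ∈ ω*(x) ⊆ K`. As `x ∉ A(K)`, the orbit of `x` leaves an isolating neighbourhood `N` at
some time `T ≥ 0`; let `eₙ ∈ [T, tₙ]` be the first time at which `xₙ·eₙ` lies in a small closed
neighbourhood `C` of `K`. The negative semi-orbit of `xₙ·eₙ` leaves `N`, so non-saddleness keeps
its positive semi-orbit in `N`, and `x ∉ A(K)` then forces `eₙ → ∞`. Hence a limit point `y` of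
`xₙ·eₙ` has its negative semi-orbit outside `int C`, and any `z ∈ ω*(y)` lies in the closed
invariant set `ω*(y)`, disjoint from `K`, so `z ∉ I(K)`. Starting near `z` at a point `y·τ`,
`τ ≪ 0`, approximated by `xₙ·(eₙ + τ)`, one flows forward to `xₙ·tₙ ≈ k` and backward to a point
of `xₙ·(-∞, τ]` near `k'`: `(k, k') ∈ J*(z)`. Negative dissonance is positive dissonance of the
reversed flow.
-/

section LimitSets

variable [TopologicalSpace M] (φ : Flow ℝ M)

theorem omegaLimit_subset_of_eventually {τ : Type*} {f : Filter τ} {ϕ : τ → M → M} {x : M}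
    {F : Set M} (hF : IsClosed F) (h : ∀ᶠ t in f, ϕ t x ∈ F) : omegaLimit f ϕ {x} ⊆ F := by
  refine (omegaLimit_subset_closure_image2 f ϕ {x} h).trans (hF.closure_subset_iff.2 ?_)
  rintro _ ⟨t, ht, _, rfl, rfl⟩
  exact ht

theorem omegaLim_eq_omegaLimit (x : M) : omegaLim φ x = omegaLimit atTop φ {x} := by
  have hb : (atTop : Filter ℝ).HasBasis (0 < ·) Ici :=
    atTop_basis.to_hasBasis
      (fun t _ => ⟨max t 1, by positivity, Ici_subset_Ici.2 (le_max_left _ _)⟩)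
      fun t _ => ⟨t, trivial, subset_rfl⟩
  ext q
  rw [mem_omegaLimit_singleton_iff_mapClusterPt, MapClusterPt,
    (hb.map _).clusterPt_iff_forall_mem_closure]
  simp only [omegaLim, mem_iInter₂, mem_Ioi]
  rfl

theorem alphaLim_eq_omegaLimit (x : M) : alphaLim φ x = omegaLimit atBot φ {x} := by
  have hb : (atBot : Filter ℝ).HasBasis (· < 0) Iic :=
    atBot_basis.to_hasBasis
      (fun t _ => ⟨min t (-1), by simp, Iic_subset_Iic.2 (min_le_left _ _)⟩)
      fun t _ => ⟨t, trivial, subset_rfl⟩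
  ext q
  rw [mem_omegaLimit_singleton_iff_mapClusterPt, MapClusterPt,
    (hb.map _).clusterPt_iff_forall_mem_closure]
  simp only [alphaLim, mem_iInter₂, mem_Iio]
  rfl

theorem omegaLim_reverse (x : M) : omegaLim φ.reverse x = alphaLim φ x := by
  ext q
  rw [omegaLim_eq_omegaLimit, alphaLim_eq_omegaLimit, mem_omegaLimit_singleton_iff_mapClusterPt,
    mem_omegaLimit_singleton_iff_mapClusterPt, ← map_neg_atTop, ← mapClusterPt_comp]
  rfl

theorem omegaLim_subset_of_eventually {x : M} {F : Set M} (hF : IsClosed F)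
    (h : ∀ᶠ t in atTop, φ t x ∈ F) : omegaLim φ x ⊆ F :=
  omegaLim_eq_omegaLimit φ x ▸ omegaLimit_subset_of_eventually hF h

theorem alphaLim_subset_of_eventually {x : M} {F : Set M} (hF : IsClosed F)
    (h : ∀ᶠ t in atBot, φ t x ∈ F) : alphaLim φ x ⊆ F :=
  alphaLim_eq_omegaLimit φ x ▸ omegaLimit_subset_of_eventually hF h

theorem isInvariant_omegaLim (x : M) : IsInvariant φ (omegaLim φ x) :=
  omegaLim_eq_omegaLimit φ x ▸
    φ.isInvariant_omegaLimit _ _ fun t => tendsto_atTop_add_const_left _ t tendsto_id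

theorem isInvariant_alphaLim (x : M) : IsInvariant φ (alphaLim φ x) :=
  alphaLim_eq_omegaLimit φ x ▸
    φ.isInvariant_omegaLimit _ _ fun t => tendsto_atBot_add_const_left _ t tendsto_id

theorem isClosed_alphaLim (x : M) : IsClosed (alphaLim φ x) :=
  alphaLim_eq_omegaLimit φ x ▸ isClosed_omegaLimit _ _ _

theorem omegaLim_nonempty [CompactSpace M] (x : M) : (omegaLim φ x).Nonempty :=
  omegaLim_eq_omegaLimit φ x ▸ nonempty_omegaLimit _ _ _ (singleton_nonempty x)

theorem alphaLim_nonempty [CompactSpace M] (x : M) : (alphaLim φ x).Nonempty :=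
  alphaLim_eq_omegaLimit φ x ▸ nonempty_omegaLimit _ _ _ (singleton_nonempty x)

theorem frequently_mem_of_mem_alphaLim {x q : M} (hq : q ∈ alphaLim φ x) {U : Set M}
    (hU : U ∈ 𝓝 q) : ∃ᶠ t in atBot, φ t x ∈ U := by
  rw [alphaLim_eq_omegaLimit, mem_omegaLimit_singleton_iff_mapClusterPt] at hq
  exact hq.frequently hU

end LimitSets

section Prolongation

variable [TopologicalSpace M] (φ : Flow ℝ M)

theorem continuous_flow_orbit (x : M) : Continuous fun t : ℝ => φ t x :=
  φ.continuous continuous_id continuous_const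

theorem mem_Jstar_of_forall_nhds [FirstCountableTopology M] {x p q : M}
    (h : ∀ U ∈ 𝓝 x, ∀ P ∈ 𝓝 p, ∀ Q ∈ 𝓝 q, ∀ T : ℝ,
      ∃ w ∈ U, ∃ t ≥ T, ∃ s ≤ -T, φ t w ∈ P ∧ φ s w ∈ Q) :
    (p, q) ∈ Jstar φ x := by
  have hcluster : MapClusterPt (p, q) (𝓝 x ×ˢ (atTop ×ˢ atBot))
      fun a : M × ℝ × ℝ => (φ a.2.1 a.1, φ a.2.2 a.1) := by
    have hb := (𝓝 p).basis_sets.prod (𝓝 q).basis_sets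
    rw [← nhds_prod_eq] at hb
    rw [hb.mapClusterPt_iff_frequently]
    rintro ⟨P, Q⟩ ⟨hP, hQ⟩
    rw [((𝓝 x).basis_sets.prod (atTop_basis.prod atBot_basis)).frequently_iff]
    rintro ⟨U, T₁, T₂⟩ ⟨hU, -, -⟩
    obtain ⟨w, hw, t, ht, s, hs, htP, hsQ⟩ := h U hU P hP Q hQ (max T₁ (-T₂))
    exact ⟨(w, t, s), ⟨hw, le_of_max_le_left ht,
      show s ≤ T₂ by linarith [le_max_right T₁ (-T₂)]⟩, htP, hsQ⟩
  obtain ⟨ψ, hψpq, hψ⟩ := hcluster.exists_seq_tendsto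
  rw [nhds_prod_eq, tendsto_prod_iff'] at hψpq
  rw [tendsto_prod_iff', tendsto_prod_iff'] at hψ
  exact ⟨fun n => (ψ n).1, fun n => (ψ n).2.1, fun n => (ψ n).2.2,
    hψ.1, hψ.2.1, hψ.2.2, hψpq.1, hψpq.2⟩

theorem mem_Jstar_of_tendsto [FirstCountableTopology M] {xs : ℕ → M} {ts e : ℕ → ℝ}
    {x y z k k' : M} (hxs : Tendsto xs atTop (𝓝 x)) (he : ∀ n, 0 ≤ e n)
    (hets : ∀ n, e n ≤ ts n) (hk : Tendsto (fun n => φ (ts n) (xs n)) atTop (𝓝 k))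
    (hy : Tendsto (fun n => φ (e n) (xs n)) atTop (𝓝 y))
    (hk' : k' ∈ alphaLim φ x) (hz : z ∈ alphaLim φ y) : (k, k') ∈ Jstar φ z := by
  refine mem_Jstar_of_forall_nhds φ fun U hU P hP Q hQ T => ?_
  obtain ⟨τ, hτT, hτU⟩ :=
    frequently_atBot.1 (frequently_mem_of_mem_alphaLim φ hz (interior_mem_nhds.2 hU)) (-T)
  obtain ⟨u, huτ, huQ⟩ :=
    frequently_atBot.1 (frequently_mem_of_mem_alphaLim φ hk' (interior_mem_nhds.2 hQ)) (τ - T)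
  have hnU : ∀ᶠ n in atTop, φ τ (φ (e n) (xs n)) ∈ U :=
    ((φ.continuous_toFun τ).tendsto y).comp hy |>.eventually (mem_interior_iff_mem_nhds.1 hτU)
  have hnQ : ∀ᶠ n in atTop, φ u (xs n) ∈ Q :=
    ((φ.continuous_toFun u).tendsto x).comp hxs |>.eventually (mem_interior_iff_mem_nhds.1 huQ)
  obtain ⟨n, hnU, hnP, hnQ⟩ := (hnU.and ((hk.eventually hP).and hnQ)).exists
  refine ⟨φ (τ + e n) (xs n), by rwa [φ.map_add], ts n - e n - τ, by linarith [hets n],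
    u - τ - e n, by linarith [he n], ?_, ?_⟩
  · rwa [← φ.map_add, show ts n - e n - τ + (τ + e n) = ts n by ring]
  · rwa [← φ.map_add, show u - τ - e n + (τ + e n) = u by ring]

end Prolongation

theorem exists_first_mem_of_continuous {X : Type*} [TopologicalSpace X] {γ : ℝ → X}
    (hγ : Continuous γ) {C : Set X} (hC : IsClosed C) {a b : ℝ} (hab : a ≤ b) (hb : γ b ∈ C) :
    ∃ e ∈ Icc a b, γ e ∈ C ∧ ∀ t ∈ Ico a e, γ t ∉ C := by
  set S := Icc a b ∩ γ ⁻¹' C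
  have hSbdd : BddBelow S := ⟨a, fun t ht => ht.1.1⟩
  have hS : sInf S ∈ S :=
    (isClosed_Icc.inter (hC.preimage hγ)).csInf_mem ⟨b, ⟨hab, le_rfl⟩, hb⟩ hSbdd
  refine ⟨sInf S, hS.1, hS.2, fun t ht htC => ?_⟩
  exact (csInf_le hSbdd ⟨⟨ht.1, ht.2.le.trans hS.1.2⟩, htC⟩).not_gt ht.2

section Dissonance

variable [TopologicalSpace M] (φ : Flow ℝ M) {K : Set M}

theorem mem_Aset_of_eventually_mem [CompactSpace M] {N : Set M} (hN : IsClosed N)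
    (hmax : ∀ y ∈ N, (∀ t, φ t y ∈ N) → y ∈ K) {x : M} (h : ∀ᶠ t in atTop, φ t x ∈ N) :
    x ∈ Aset φ K := by
  have hsub := omegaLim_subset_of_eventually φ hN h
  exact ⟨omegaLim_nonempty φ x, fun q hq => hmax q (hsub hq) fun t =>
    hsub (isInvariant_omegaLim φ x t hq)⟩

theorem tendsto_atTop_of_notMem_Aset [CompactSpace M] {N : Set M} (hN : IsClosed N)
    (hmax : ∀ y ∈ N, (∀ t, φ t y ∈ N) → y ∈ K) {x : M} (hx : x ∉ Aset φ K)
    {xs : ℕ → M} (hxs : Tendsto xs atTop (𝓝 x)) {e : ℕ → ℝ}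
    (hstay : ∀ n, ∀ s ≥ e n, φ s (xs n) ∈ N) : Tendsto e atTop atTop := by
  refine tendsto_atTop.2 fun c => ?_
  by_contra hc
  rw [not_eventually] at hc
  refine hx (mem_Aset_of_eventually_mem φ hN hmax ?_)
  filter_upwards [eventually_ge_atTop c] with s hs
  exact hN.mem_of_frequently_of_tendsto
    (hc.mono fun n hn => hstay n s (by linarith [not_le.1 hn]))
    (((φ.continuous_toFun s).tendsto x).comp hxs)

theorem alphaLim_subset_of_tendsto {F : Set M} (hF : IsClosed F) {xs : ℕ → M} {e : ℕ → ℝ}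
    {T : ℝ} {y : M} (he : Tendsto e atTop atTop)
    (hy : Tendsto (fun n => φ (e n) (xs n)) atTop (𝓝 y))
    (hmem : ∀ n, ∀ t ∈ Ico T (e n), φ t (xs n) ∈ F) : alphaLim φ y ⊆ F := by
  refine alphaLim_subset_of_eventually φ hF ?_
  filter_upwards [eventually_lt_atBot 0] with t ht
  refine hF.mem_of_tendsto (((φ.continuous_toFun t).tendsto y).comp hy) ?_
  filter_upwards [he.eventually_ge_atTop (T - t)] with n hn
  rw [Function.comp_apply, ← φ.map_add]
  exact hmem n _ ⟨by linarith, by linarith⟩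

theorem notMem_Iset_of_mem_isInvariant {F : Set M} (hF : IsClosed F) (hinv : IsInvariant φ F)
    (hFK : Disjoint F K) {z : M} (hz : z ∈ F) : z ∉ Iset φ K := by
  have hω := omegaLim_subset_of_eventually φ hF (Eventually.of_forall fun t => hinv t hz)
  have hα := alphaLim_subset_of_eventually φ hF (Eventually.of_forall fun t => hinv t hz)
  rintro (⟨⟨q, hq⟩, hK⟩ | ⟨⟨q, hq⟩, hK⟩)
  · exact hFK.ne_of_mem (hω hq) (hK hq) rfl
  · exact hFK.ne_of_mem (hα hq) (hK hq) rfl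

end Dissonance

theorem exists_extDissonant_of_posDissonant [MetricSpace M] [CompactSpace M] {φ : Flow ℝ M}
    {K : Set M} (hIso : IsIsolatedInv φ K) (hNS : NonSaddle φ K) {x : M}
    (hx : PosDissonant φ K x) : ∃ z, ExtDissonant φ K z := by
  obtain ⟨hxI, hxA, k, ⟨xs₀, ts₀, hxs₀, hts₀, hk₀⟩, hkK⟩ := hx
  obtain ⟨⟨k', hk'⟩, hαK⟩ := hxI.resolve_left hxA
  obtain ⟨hKc, -, N, hNc, hKN, hNmax⟩ := hIso
  obtain ⟨V, hKV, -, hdich⟩ := hNS N hKN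
  obtain ⟨C, -, hCc, hKC, hCV⟩ := exists_compact_closed_between hKc isOpen_interior hKV
  obtain ⟨T, hT, hTN⟩ : ∃ T, 0 ≤ T ∧ φ T x ∉ N := by
    by_contra! h
    exact hxA (mem_Aset_of_eventually_mem φ hNc.isClosed hNmax ((eventually_ge_atTop 0).mono h))
  obtain ⟨g, hg, hgood⟩ := extraction_of_eventually_atTop <| (hts₀.eventually_ge_atTop T).and <|
    ((((φ.continuous_toFun T).tendsto x).comp hxs₀).eventually
      (hNc.isClosed.isOpen_compl.mem_nhds hTN)).and
    (hk₀.eventually (mem_interior_iff_mem_nhds.1 (hKC hkK)))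
  obtain ⟨xs, ts, hxs, hk, hgood⟩ : ∃ (xs : ℕ → M) (ts : ℕ → ℝ), Tendsto xs atTop (𝓝 x) ∧
      Tendsto (fun n => φ (ts n) (xs n)) atTop (𝓝 k) ∧
      ∀ n, T ≤ ts n ∧ φ T (xs n) ∉ N ∧ φ (ts n) (xs n) ∈ C :=
    ⟨xs₀ ∘ g, ts₀ ∘ g, hxs₀.comp hg.tendsto_atTop, hk₀.comp hg.tendsto_atTop, hgood⟩
  choose e he heC hfirst using fun n =>
    exists_first_mem_of_continuous (continuous_flow_orbit φ (xs n)) hCc (hgood n).1 (hgood n).2.2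
  have hstay : ∀ n, ∀ s ≥ e n, φ s (xs n) ∈ N := by
    intro n s hs
    have hshift : ∀ t, φ (t - e n) (φ (e n) (xs n)) = φ t (xs n) := fun t => by
      rw [← φ.map_add, sub_add_cancel]
    refine hshift s ▸ (hdich _ (interior_subset (hCV (heC n)))).resolve_right (fun hneg => ?_)
      ⟨s - e n, by linarith, rfl⟩
    exact (hgood n).2.1 (hshift T ▸ hneg ⟨T - e n, by linarith [(he n).1], rfl⟩)
  have he_top := tendsto_atTop_of_notMem_Aset φ hNc.isClosed hNmax hxA hxs hstay
  obtain ⟨y, -, g', hg', hy⟩ := isCompact_univ.tendsto_subseq fun n => mem_univ (φ (e n) (xs n))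
  have hαy : alphaLim φ y ⊆ (interior C)ᶜ :=
    alphaLim_subset_of_tendsto φ isOpen_interior.isClosed_compl (he_top.comp hg'.tendsto_atTop) hy
      fun n t ht h => hfirst (g' n) t ht (interior_subset h)
  obtain ⟨z, hz⟩ := alphaLim_nonempty φ y
  refine ⟨z, notMem_Iset_of_mem_isInvariant φ (isClosed_alphaLim φ y) (isInvariant_alphaLim φ y)
    (disjoint_compl_left.mono hαy hKC) hz, (k, k'), ?_, hkK, hαK hk'⟩
  exact mem_Jstar_of_tendsto φ (hxs.comp hg'.tendsto_atTop) (fun n => hT.trans (he (g' n)).1)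
    (fun n => (he (g' n)).2) (hk.comp hg'.tendsto_atTop) hy hk' hz

section Reverse

variable [TopologicalSpace M] {φ : Flow ℝ M} {K : Set M}

theorem Flow.reverse_reverse : φ.reverse.reverse = φ :=
  Flow.ext fun t x => by simp only [Flow.reverse_apply, neg_neg]

theorem posOrbit_reverse (x : M) : posOrbit φ.reverse x = negOrbit φ x := by
  ext w
  constructor
  · rintro ⟨t, ht, rfl⟩
    exact ⟨-t, by linarith, rfl⟩
  · rintro ⟨t, ht, rfl⟩
    exact ⟨-t, by linarith, by rw [Flow.reverse_apply, neg_neg]⟩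

theorem negOrbit_reverse (x : M) : negOrbit φ.reverse x = posOrbit φ x := by
  rw [← posOrbit_reverse, Flow.reverse_reverse]

theorem Aset_reverse : Aset φ.reverse K = Rset φ K := by
  ext x
  simp only [Aset, Rset, mem_ofPred_eq, omegaLim_reverse]

theorem Rset_reverse : Rset φ.reverse K = Aset φ K := by
  rw [← Aset_reverse, Flow.reverse_reverse]

theorem Iset_reverse : Iset φ.reverse K = Iset φ K := by
  rw [Iset, Iset, Aset_reverse, Rset_reverse, union_comm]

theorem Jplus_reverse (x : M) : Jplus φ.reverse x = Jminus φ x := by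
  ext y
  constructor
  · rintro ⟨xs, ts, hxs, hts, hy⟩
    exact ⟨xs, fun n => -ts n, hxs, tendsto_neg_atTop_atBot.comp hts, hy⟩
  · rintro ⟨xs, ts, hxs, hts, hy⟩
    refine ⟨xs, fun n => -ts n, hxs, tendsto_neg_atBot_atTop.comp hts, ?_⟩
    simpa only [Flow.reverse_apply, neg_neg] using hy

theorem swap_mem_Jstar_of_mem_Jstar_reverse {x p q : M} (h : (p, q) ∈ Jstar φ.reverse x) :
    (q, p) ∈ Jstar φ x := by
  obtain ⟨xs, ts, ss, hxs, hts, hss, hp, hq⟩ := h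
  exact ⟨xs, fun n => -ss n, fun n => -ts n, hxs, tendsto_neg_atBot_atTop.comp hss,
    tendsto_neg_atTop_atBot.comp hts, hq, hp⟩

theorem IsIsolatedInv.reverse (h : IsIsolatedInv φ K) : IsIsolatedInv φ.reverse K := by
  obtain ⟨hKc, hKinv, N, hNc, hKN, hNmax⟩ := h
  refine ⟨hKc, fun x hx t => hKinv x hx (-t), N, hNc, hKN, fun x hx hxN => hNmax x hx fun t => ?_⟩
  simpa only [Flow.reverse_apply, neg_neg] using hxN (-t)

theorem NonSaddle.reverse (h : NonSaddle φ K) : NonSaddle φ.reverse K := by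
  intro U hU
  obtain ⟨V, hKV, hVU, hdich⟩ := h U hU
  refine ⟨V, hKV, hVU, fun x hx => ?_⟩
  rw [posOrbit_reverse, negOrbit_reverse]
  exact (hdich x hx).symm

theorem posDissonant_reverse_iff {x : M} : PosDissonant φ.reverse K x ↔ NegDissonant φ K x := by
  rw [PosDissonant, NegDissonant, Iset_reverse, Aset_reverse, Jplus_reverse]

theorem ExtDissonant.of_reverse {z : M} (h : ExtDissonant φ.reverse K z) : ExtDissonant φ K z := by
  obtain ⟨hzI, ⟨p, q⟩, hpq, hp, hq⟩ := h
  rw [Iset_reverse] at hzI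
  exact ⟨hzI, (q, p), swap_mem_Jstar_of_mem_Jstar_reverse hpq, hq, hp⟩

end Reverse

/-- on a compact space, if `K` has a positively or negatively dissonant
point then it has an externally dissonant point. -/
theorem stmt16 {M : Type*} [MetricSpace M] [CompactSpace M]
    (φ : Flow ℝ M) (K : Set M)
    (hIso : IsIsolatedInv φ K) (hNS : NonSaddle φ K)
    (hd : ∃ x : M, PosDissonant φ K x ∨ NegDissonant φ K x) :
    ∃ y : M, ExtDissonant φ K y := by
  obtain ⟨x, hx | hx⟩ := hd
  · exact exists_extDissonant_of_posDissonant hIso hNS hx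
  · obtain ⟨z, hz⟩ := exists_extDissonant_of_posDissonant hIso.reverse hNS.reverse
      (posDissonant_reverse_iff.2 hx)
    exact ⟨z, hz.of_reverse⟩
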